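/- Let G be a semigroup generated by a single element z (i.e., Subsemigroup.closure {z} = ⊤, so every element of G is a power z^k with k ≥ 1) such that z is indecomposable, i.e., a*b ≠ z for all a, b ∈ G. (These are exactly the monogenic semigroups that are not cyclic groups: the finite monogenic semigroups Z_{m,n} with index m > 1, and the infinite monogenic semigroup of positive integers under addition.) Then every Schur ring over G is discrete: every block of every Schur ring over G is a singleton. -/

import Mathlib

open scoped Pointwise

/-- The simple quantity `[X] = ∑_{x ∈ X} x` in the semigroup algebra `MonoidAlgebra ℚ G`. -/
noncomputable def simpleQty {G : Type*} [Mul G] (X : Finset G) : MonoidAlgebra ℚ G :=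
  ∑ x ∈ X, MonoidAlgebra.single x (1 : ℚ)

/-- A partition of `G` into nonempty finite blocks. -/
def IsPartition {G : Type*} (S : Set (Set G)) : Prop :=
  (∀ X ∈ S, X.Nonempty ∧ X.Finite) ∧ ∀ x : G, ∃! X, X ∈ S ∧ x ∈ X

/-- The ℚ-linear span of the simple quantities of the blocks of `S`. -/
noncomputable def schurSpan {G : Type*} [Mul G] (S : Set (Set G)) :
    Submodule ℚ (MonoidAlgebra ℚ G) :=
  Submodule.span ℚ { z | ∃ X ∈ S, ∃ hX : X.Finite, z = simpleQty hX.toFinset }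

/-- A Schur ring over the semigroup `G`. -/
def IsSchurRing {G : Type*} [Semigroup G] (S : Set (Set G)) : Prop :=
  IsPartition S ∧ ∀ X ∈ S, ∀ Y ∈ S, ∀ (hX : X.Finite) (hY : Y.Finite),
    simpleQty hX.toFinset * simpleQty hY.toFinset ∈ schurSpan S

/-- `A` is an `S`-subset: a union of blocks of `S`. -/
def IsSUnion {G : Type*} (S : Set (Set G)) (A : Set G) : Prop :=
  ∀ X ∈ S, X ⊆ A ∨ X ∩ A = ∅

lemma simpleQty_apply {G : Type*} [Mul G] (X : Finset G) (a : G) [Decidable (a ∈ X)] :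
    (simpleQty X).coeff a = if a ∈ X then 1 else 0 := by
  classical
  rw [simpleQty, MonoidAlgebra.coeff_sum, Finset.sum_apply']
  simp only [MonoidAlgebra.coeff_single, Finsupp.single_apply, Finset.sum_ite_eq', ite_eq_ite]

/-- Coefficients of span elements are constant on blocks. -/
lemma span_const_on_blocks {G : Type*} [Mul G] {S : Set (Set G)}
    (hP : IsPartition S) {p : MonoidAlgebra ℚ G} (hp : p ∈ schurSpan S)
    {X : Set G} (hX : X ∈ S) {a b : G} (ha : a ∈ X) (hb : b ∈ X) :
    p.coeff a = p.coeff b := by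
  classical
  induction hp using Submodule.span_induction with
  | mem q hq =>
    obtain ⟨Y, hY, hYf, rfl⟩ := hq
    rw [simpleQty_apply, simpleQty_apply]
    have hiff : a ∈ Y ↔ b ∈ Y := by
      constructor
      · intro haY
        obtain ⟨Z, hZ, huniq⟩ := hP.2 a
        have h1 : X = Z := huniq X ⟨hX, ha⟩
        have h2 : Y = Z := huniq Y ⟨hY, haY⟩
        rw [h2, ← h1]; exact hb
      · intro hbY
        obtain ⟨Z, hZ, huniq⟩ := hP.2 b
        have h1 : X = Z := huniq X ⟨hX, hb⟩
        have h2 : Y = Z := huniq Y ⟨hY, hbY⟩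
        rw [h2, ← h1]; exact ha
    simp [Set.Finite.mem_toFinset, hiff]
  | zero => simp
  | add q r hq hr ihq ihr => rw [MonoidAlgebra.coeff_add, Finsupp.add_apply, Finsupp.add_apply, ihq, ihr]
  | smul c q hq ihq => rw [MonoidAlgebra.coeff_smul_apply, MonoidAlgebra.coeff_smul_apply, ihq]

lemma schurSpan_mul {G : Type*} [Semigroup G] {S : Set (Set G)}
    (hS : IsSchurRing S) {p q : MonoidAlgebra ℚ G}
    (hp : p ∈ schurSpan S) (hq : q ∈ schurSpan S) : p * q ∈ schurSpan S := by
  induction hp using Submodule.span_induction with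
  | mem f hf =>
    obtain ⟨X, hX, hXf, rfl⟩ := hf
    induction hq using Submodule.span_induction with
    | mem g hg =>
      obtain ⟨Y, hY, hYf, rfl⟩ := hg
      exact hS.2 X hX Y hY hXf hYf
    | zero => simp
    | add g h hg hh ihg ihh =>
      rw [mul_add]; exact Submodule.add_mem _ ihg ihh
    | smul c g hg ihg =>
      rw [mul_smul_comm]; exact Submodule.smul_mem _ _ ihg
  | zero => simp
  | add f g hf hg ihf ihg =>
    rw [add_mul]; exact Submodule.add_mem _ ihf ihg
  | smul c f hf ihf =>
    rw [smul_mul_assoc]; exact Submodule.smul_mem _ _ ihf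

lemma mul_apply_nonneg {G : Type*} [Mul G] {f g : MonoidAlgebra ℚ G}
    (hf : ∀ x, 0 ≤ f.coeff x) (hg : ∀ x, 0 ≤ g.coeff x) (x : G) : 0 ≤ (f * g).coeff x := by
  classical
  rw [MonoidAlgebra.mul_apply, Finsupp.sum]
  refine Finset.sum_nonneg fun a _ => ?_
  rw [Finsupp.sum]
  refine Finset.sum_nonneg fun b _ => ?_
  split
  · exact mul_nonneg (hf a) (hg b)
  · exact le_refl 0

lemma mul_apply_pos {G : Type*} [Mul G] {f g : MonoidAlgebra ℚ G}
    (hf : ∀ x, 0 ≤ f.coeff x) (hg : ∀ x, 0 ≤ g.coeff x) {a b : G}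
    (ha : 0 < f.coeff a) (hb : 0 < g.coeff b) : 0 < (f * g).coeff (a * b) := by
  classical
  rw [MonoidAlgebra.mul_apply, Finsupp.sum]
  have haS : a ∈ f.coeff.support := Finsupp.mem_support_iff.2 (ne_of_gt ha)
  have hbS : b ∈ g.coeff.support := Finsupp.mem_support_iff.2 (ne_of_gt hb)
  refine Finset.sum_pos' (fun a' _ => ?_) ⟨a, haS, ?_⟩
  · rw [Finsupp.sum]
    refine Finset.sum_nonneg fun b' _ => ?_
    split
    · exact mul_nonneg (hf a') (hg b')
    · exact le_refl 0
  · rw [Finsupp.sum]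
    refine Finset.sum_pos' (fun b' _ => ?_) ⟨b, hbS, ?_⟩
    · split
      · exact mul_nonneg (hf a) (hg b')
      · exact le_refl 0
    · rw [if_pos rfl]; exact mul_pos ha hb

lemma mul_apply_indec {G : Type*} [Mul G] {z : G} (hind : ∀ a b : G, a * b ≠ z)
    (f g : MonoidAlgebra ℚ G) : (f * g).coeff z = 0 := by
  classical
  rw [MonoidAlgebra.mul_apply, Finsupp.sum]
  refine Finset.sum_eq_zero fun a _ => ?_
  rw [Finsupp.sum]
  exact Finset.sum_eq_zero fun b _ => if_neg (hind a b)

/-- if a semigroup is generated by a single indecomposable element,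
then every Schur ring over it is discrete. -/
theorem monogenic_schur_discrete {G : Type*} [Semigroup G] (z : G)
    (hgen : Subsemigroup.closure ({z} : Set G) = ⊤)
    (hind : ∀ a b : G, a * b ≠ z)
    (S : Set (Set G)) (hS : IsSchurRing S) :
    ∀ X ∈ S, ∃ x : G, X = {x} := by
  classical
  obtain ⟨hPart, hMul⟩ := hS
  -- the block containing z
  obtain ⟨C, ⟨hCS, hzC⟩, hCuniq⟩ := hPart.2 z
  have hCfin : C.Finite := (hPart.1 C hCS).2
  set c : MonoidAlgebra ℚ G := simpleQty hCfin.toFinset with hc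
  have hc_mem : c ∈ schurSpan S := Submodule.subset_span ⟨C, hCS, hCfin, rfl⟩
  have hc_nonneg : ∀ x, 0 ≤ c.coeff x := by
    intro x; rw [hc, simpleQty_apply]; split <;> norm_num
  have hcz : 0 < c.coeff z := by
    rw [hc, simpleQty_apply, if_pos (hCfin.mem_toFinset.2 hzC)]; norm_num
  -- every element carries a positive coefficient of a nonnegative span element
  -- vanishing at z (unless the element is z itself)
  have hT : ∀ g : G, ∃ f : MonoidAlgebra ℚ G, f ∈ schurSpan S ∧ (∀ x, 0 ≤ f.coeff x) ∧
      0 < f.coeff g ∧ (g = z ∨ f.coeff z = 0) := by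
    intro g
    have hg : g ∈ Subsemigroup.closure ({z} : Set G) := by rw [hgen]; trivial
    induction hg using Subsemigroup.closure_induction with
    | mem x hx =>
      rcases hx with rfl
      exact ⟨c, hc_mem, hc_nonneg, hcz, Or.inl rfl⟩
    | mul x y hx hy ihx ihy =>
      obtain ⟨f, hf1, hf2, hf3, -⟩ := ihx
      obtain ⟨f', hf'1, hf'2, hf'3, -⟩ := ihy
      refine ⟨f * f', schurSpan_mul ⟨hPart, hMul⟩ hf1 hf'1,
        mul_apply_nonneg hf2 hf'2, mul_apply_pos hf2 hf'2 hf3 hf'3,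
        Or.inr (mul_apply_indec hind f f')⟩
  -- the block of z is {z}
  have hCz : C = {z} := by
    refine Set.eq_singleton_iff_unique_mem.2 ⟨hzC, fun w hw => ?_⟩
    by_contra hne
    obtain ⟨f, hf1, hf2, hf3, hf4⟩ := hT w
    have hfz : f.coeff z = 0 := hf4.resolve_left hne
    have := span_const_on_blocks hPart hf1 hCS hw hzC
    rw [hfz] at this
    exact absurd this (ne_of_gt hf3)
  -- every block is a singleton (by closure induction on a representative)
  have hP : ∀ g : G, ∀ X ∈ S, g ∈ X → X = {g} := by
    intro g
    have hg : g ∈ Subsemigroup.closure ({z} : Set G) := by rw [hgen]; trivial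
    induction hg using Subsemigroup.closure_induction with
    | mem x hx =>
      rcases hx with rfl
      intro X hXS hxX
      obtain ⟨Z, hZ, huniq⟩ := hPart.2 x
      have h1 : X = Z := huniq X ⟨hXS, hxX⟩
      have h2 : C = Z := huniq C ⟨hCS, hzC⟩
      rw [h1, ← h2, hCz]
    | mul x y hx hy ihx ihy =>
      intro X hXS hxyX
      -- {x} and {y} are blocks
      obtain ⟨Y, ⟨hYS, hxY⟩, -⟩ := hPart.2 x
      have hYx : Y = {x} := ihx Y hYS hxY
      obtain ⟨Y', ⟨hY'S, hyY'⟩, -⟩ := hPart.2 y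
      have hY'y : Y' = {y} := ihy Y' hY'S hyY'
      subst hYx; subst hY'y
      have hYfin : ({x} : Set G).Finite := Set.finite_singleton x
      have hY'fin : ({y} : Set G).Finite := Set.finite_singleton y
      have hprod := hMul _ hYS _ hY'S hYfin hY'fin
      have heval : ∀ w : G, (simpleQty hYfin.toFinset * simpleQty hY'fin.toFinset).coeff w
          = if x * y = w then 1 else 0 := by
        intro w
        have h1 : hYfin.toFinset = {x} := by ext a; simp
        have h2 : hY'fin.toFinset = {y} := by ext a; simp
        rw [h1, h2]
        simp only [simpleQty, Finset.sum_singleton, MonoidAlgebra.single_mul_single,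
          one_mul, MonoidAlgebra.coeff_single, Finsupp.single_apply]
      refine Set.eq_singleton_iff_unique_mem.2 ⟨hxyX, fun w hw => ?_⟩
      have hconst := span_const_on_blocks hPart hprod hXS hw hxyX
      rw [heval w, heval (x * y), if_pos rfl] at hconst
      by_contra hne
      rw [if_neg (fun h => hne h.symm)] at hconst
      norm_num at hconst
  intro X hXS
  obtain ⟨x, hx⟩ := (hPart.1 X hXS).1
  exact ⟨x, hP x X hXS hx⟩
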